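/- arXiv:1507.08456 — 3 statements merged into one kernel-verified Lean document; each statement's English description precedes it below -/
import Mathlib

section
/- Let r, t, t' be positive integers with 11 ≤ t ≤ t' ≤ 2t − 2, and let c be a nonnegative integer with t ≥ 8r + 4c + 2. Then the complete bipartite graph K_{t,t'} is (r, c)-locally Eulerian. -/
open SimpleGraph

/-- A set of edges (as `Sym2 V`) is a matching: pairwise vertex-disjoint. -/
def IsMatchingSet {V : Type*} (M : Finset (Sym2 V)) : Prop :=
  ∀ e ∈ M, ∀ f ∈ M, e ≠ f → ∀ v : V, v ∈ e → v ∉ f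

/-- The matching Kneser graph `KG(G, rK₂)`: vertices are the matchings of size `r` in `G`,
two of them adjacent iff they are edge-disjoint. -/
def matchingKG {V : Type*} (G : SimpleGraph V) (r : ℕ) :
    SimpleGraph {M : Finset (Sym2 V) // ↑M ⊆ G.edgeSet ∧ IsMatchingSet M ∧ M.card = r} where
  Adj A B := Disjoint A.1 B.1 ∧ A ≠ B
  symm := ⟨fun _ _ h => ⟨h.1.symm, Ne.symm h.2⟩⟩
  loopless := ⟨fun _ h => h.2 rfl⟩

/-- `ex(G, rK₂)`: the maximum number of edges of a spanning subgraph of `G`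
containing no matching of size `r`. -/
noncomputable def exMatching {V : Type*} (G : SimpleGraph V) (r : ℕ) : ℕ :=
  sSup {k | ∃ E' : Finset (Sym2 V), ↑E' ⊆ G.edgeSet ∧
    (∀ M ⊆ E', IsMatchingSet M → M.card ≠ r) ∧ E'.card = k}

/-- A graph `H` is `(r, c)`-locally Eulerian if there are pairwise edge-disjoint
subgraphs `K v` (one for each vertex `v`) such that each `K v` is connected, has at
least one edge, all its degrees are even, contains `v`, and every vertex `u ≠ v` of it
satisfies `deg_{K v}(v) ≥ (r−1)·deg_{K v}(u) + c`. -/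
def LocallyEulerian {W : Type*} (H : SimpleGraph W) (r c : ℕ) : Prop :=
  ∃ K : W → H.Subgraph,
    (∀ v w : W, v ≠ w → Disjoint (K v).edgeSet (K w).edgeSet) ∧
    ∀ v : W,
      (K v).coe.Connected ∧
      (K v).edgeSet.Nonempty ∧
      (∀ u ∈ (K v).verts, Even (((K v).neighborSet u).ncard)) ∧
      v ∈ (K v).verts ∧
      (∀ u ∈ (K v).verts, u ≠ v →
        (r - 1) * ((K v).neighborSet u).ncard + c ≤ ((K v).neighborSet v).ncard)

/-!
Give every vertex `v` a *flower*: `k = r + ⌊c/2⌋` four-cycles through `v` that pairwise share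
only `v`. It is connected and Eulerian, `v` has degree `2k ≥ 2(r - 1) + c` and every other vertex
has degree `2`, so it suffices to find such flowers in `K_{t,t'}` that are pairwise edge-disjoint.

Put `p = 4k + (t' mod 2)`, `q = t - p ≥ p` and `m = t' - p ≥ q`, which is even. The flowers
centred at the left vertices `[0, p)`, at the right vertices `[0, p)` and at the left vertices
`[p, t)` live in the blocks `[0, p) × [0, p)`, `[p, 2p) × [0, p)` and `[p, t) × [p, p + q)`,
each a copy of a translation-invariant packing of `K_{n,n}` on `ZMod n`; those centred at the
right vertices `[p, t')` live in `[0, 4k) × [p, t')`, where the parity of the centre decides which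
half of `[0, 4k)` carries its spokes. The four blocks are pairwise edge-disjoint.
-/

open Function Set Sum

variable {V V' : Type*} {k : ℕ}

structure Flower (V : Type*) (k : ℕ) where
  center : V
  A : Fin k → V
  B : Fin k → V
  W : Fin k → V

namespace Flower

def edges (F : Flower V k) : Set (Sym2 V) :=
  ⋃ j, {s(F.center, F.A j), s(F.center, F.B j), s(F.W j, F.A j), s(F.W j, F.B j)}

def map (f : V → V') (F : Flower V k) : Flower V' k :=
  ⟨f F.center, f ∘ F.A, f ∘ F.B, f ∘ F.W⟩

lemma edges_map (f : V → V') (F : Flower V k) : (F.map f).edges = Sym2.map f '' F.edges := by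
  simp [edges, map, image_iUnion, image_insert_eq]

lemma pairwise_disjoint_edges_map {ι : Type*} {F : ι → Flower V k} {f : V → V'}
    (hf : Injective f) (h : Pairwise (Disjoint on fun i => (F i).edges)) :
    Pairwise (Disjoint on fun i => ((F i).map f).edges) := fun i j hij => by
  simpa only [onFun, edges_map] using (disjoint_image_iff (Sym2.map.injective hf)).2 (h hij)

structure IsIn (G : SimpleGraph V) (F : Flower V k) : Prop where
  adj_center_A : ∀ j, G.Adj F.center (F.A j)
  adj_center_B : ∀ j, G.Adj F.center (F.B j)
  adj_W_A : ∀ j, G.Adj (F.W j) (F.A j)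
  adj_W_B : ∀ j, G.Adj (F.W j) (F.B j)
  injective_A : Injective F.A
  injective_B : Injective F.B
  injective_W : Injective F.W
  A_ne_B : ∀ i j, F.A i ≠ F.B j
  A_ne_W : ∀ i j, F.A i ≠ F.W j
  B_ne_W : ∀ i j, F.B i ≠ F.W j
  W_ne_center : ∀ j, F.W j ≠ F.center

variable {G : SimpleGraph V} {F : Flower V k}

lemma IsIn.map {G' : SimpleGraph V'} (hF : F.IsIn G) (φ : G ↪g G') : (F.map φ).IsIn G' where
  adj_center_A j := φ.map_adj_iff.2 (hF.adj_center_A j)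
  adj_center_B j := φ.map_adj_iff.2 (hF.adj_center_B j)
  adj_W_A j := φ.map_adj_iff.2 (hF.adj_W_A j)
  adj_W_B j := φ.map_adj_iff.2 (hF.adj_W_B j)
  injective_A := φ.injective.comp hF.injective_A
  injective_B := φ.injective.comp hF.injective_B
  injective_W := φ.injective.comp hF.injective_W
  A_ne_B i j := φ.injective.ne (hF.A_ne_B i j)
  A_ne_W i j := φ.injective.ne (hF.A_ne_W i j)
  B_ne_W i j := φ.injective.ne (hF.B_ne_W i j)
  W_ne_center j := φ.injective.ne (hF.W_ne_center j)

lemma IsIn.edges_subset (hF : F.IsIn G) : F.edges ⊆ G.edgeSet := by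
  intro e he
  obtain ⟨j, rfl | rfl | rfl | rfl⟩ := mem_iUnion.1 he
  exacts [hF.adj_center_A j, hF.adj_center_B j, hF.adj_W_A j, hF.adj_W_B j]

def toSubgraph (F : Flower V k) (hF : F.IsIn G) : G.Subgraph where
  verts := insert F.center (range F.A ∪ range F.B ∪ range F.W)
  Adj x y := s(x, y) ∈ F.edges
  adj_sub h := hF.edges_subset h
  edge_vert := by
    intro x y h
    obtain ⟨j, h⟩ := mem_iUnion.1 h
    aesop
  symm := ⟨fun x y h => by rwa [Sym2.eq_swap]⟩

lemma edgeSet_toSubgraph (hF : F.IsIn G) : (F.toSubgraph hF).edgeSet = F.edges := by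
  ext e
  induction e using Sym2.ind
  rfl

lemma mem_neighborSet_toSubgraph (hF : F.IsIn G) {x y : V} :
    y ∈ (F.toSubgraph hF).neighborSet x ↔ ∃ j, s(x, y) = s(F.center, F.A j) ∨
      s(x, y) = s(F.center, F.B j) ∨ s(x, y) = s(F.W j, F.A j) ∨ s(x, y) = s(F.W j, F.B j) := by
  simp [toSubgraph, edges]

namespace IsIn
variable (hF : F.IsIn G)
include hF

lemma A_ne_center (j : Fin k) : F.A j ≠ F.center := (hF.adj_center_A j).ne'
lemma B_ne_center (j : Fin k) : F.B j ≠ F.center := (hF.adj_center_B j).ne'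

lemma neighborSet_center :
    (F.toSubgraph hF).neighborSet F.center = range F.A ∪ range F.B := by
  ext u
  have := hF.A_ne_center; have := hF.B_ne_center; have := hF.W_ne_center
  simp only [mem_neighborSet_toSubgraph, Sym2.eq_iff, eq_comm (a := F.center)]
  aesop

lemma neighborSet_A (j : Fin k) : (F.toSubgraph hF).neighborSet (F.A j) = {F.center, F.W j} := by
  ext u
  have := hF.A_ne_center; have := hF.A_ne_W; have := hF.A_ne_B
  simp only [mem_neighborSet_toSubgraph, Sym2.eq_iff, hF.injective_A.eq_iff]
  aesop

lemma neighborSet_B (j : Fin k) : (F.toSubgraph hF).neighborSet (F.B j) = {F.center, F.W j} := by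
  ext u
  have := hF.B_ne_center; have := hF.B_ne_W; have := fun i j => (hF.A_ne_B j i).symm
  simp only [mem_neighborSet_toSubgraph, Sym2.eq_iff, hF.injective_B.eq_iff]
  aesop

lemma neighborSet_W (j : Fin k) : (F.toSubgraph hF).neighborSet (F.W j) = {F.A j, F.B j} := by
  ext u
  have := fun i j => (hF.A_ne_W j i).symm; have := fun i j => (hF.B_ne_W j i).symm
  have := fun j => (hF.A_ne_center j).symm; have := fun j => (hF.B_ne_center j).symm
  simp only [mem_neighborSet_toSubgraph, Sym2.eq_iff, hF.injective_W.eq_iff, hF.W_ne_center]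
  aesop

lemma ncard_neighborSet_center :
    ((F.toSubgraph hF).neighborSet F.center).ncard = 2 * k := by
  have hAB : Disjoint (range F.A) (range F.B) :=
    disjoint_left.2 <| by rintro _ ⟨i, rfl⟩ ⟨j, h⟩; exact hF.A_ne_B i j h.symm
  rw [hF.neighborSet_center, ncard_union_eq hAB, ncard_range_of_injective hF.injective_A,
    ncard_range_of_injective hF.injective_B]
  simp [two_mul]

lemma ncard_neighborSet_of_ne_center {u : V} (hu : u ∈ (F.toSubgraph hF).verts)
    (hne : u ≠ F.center) : ((F.toSubgraph hF).neighborSet u).ncard = 2 := by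
  obtain rfl | ((⟨j, rfl⟩ | ⟨j, rfl⟩) | ⟨j, rfl⟩) := hu
  · exact absurd rfl hne
  · rw [hF.neighborSet_A, ncard_pair (hF.W_ne_center j).symm]
  · rw [hF.neighborSet_B, ncard_pair (hF.W_ne_center j).symm]
  · rw [hF.neighborSet_W, ncard_pair (hF.A_ne_B j j)]

lemma connected : (F.toSubgraph hF).coe.Connected := by
  have hc : F.center ∈ (F.toSubgraph hF).verts := mem_insert _ _
  have hA (j : Fin k) : (F.toSubgraph hF).Adj F.center (F.A j) := mem_iUnion.2 ⟨j, by simp⟩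
  have hB (j : Fin k) : (F.toSubgraph hF).Adj F.center (F.B j) := mem_iUnion.2 ⟨j, by simp⟩
  have hWA (j : Fin k) : (F.toSubgraph hF).Adj (F.W j) (F.A j) := mem_iUnion.2 ⟨j, by simp⟩
  refine (SimpleGraph.connected_iff_exists_forall_reachable _).2 ⟨⟨_, hc⟩, ?_⟩
  rintro ⟨u, rfl | ((⟨j, rfl⟩ | ⟨j, rfl⟩) | ⟨j, rfl⟩)⟩
  · rfl
  · exact (hA j).coe.reachable
  · exact (hB j).coe.reachable
  · exact (hA j).coe.reachable.trans (hWA j).coe.reachable.symm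

lemma locallyEulerian_conditions {r c : ℕ} (hk : 0 < k) (hrc : 2 * (r - 1) + c ≤ 2 * k) :
    (F.toSubgraph hF).coe.Connected ∧ (F.toSubgraph hF).edgeSet.Nonempty ∧
    (∀ u ∈ (F.toSubgraph hF).verts, Even ((F.toSubgraph hF).neighborSet u).ncard) ∧
    F.center ∈ (F.toSubgraph hF).verts ∧
    ∀ u ∈ (F.toSubgraph hF).verts, u ≠ F.center →
      (r - 1) * ((F.toSubgraph hF).neighborSet u).ncard + c ≤
        ((F.toSubgraph hF).neighborSet F.center).ncard := by
  have hedge : s(F.center, F.A ⟨0, hk⟩) ∈ F.edges := mem_iUnion.2 ⟨⟨0, hk⟩, by simp⟩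
  refine ⟨hF.connected, ⟨_, (edgeSet_toSubgraph hF).superset hedge⟩, fun u hu => ?_,
    mem_insert _ _, fun u hu hne => ?_⟩
  · rcases eq_or_ne u F.center with rfl | hne
    · simp [hF.ncard_neighborSet_center]
    · simp [hF.ncard_neighborSet_of_ne_center hu hne]
  · rw [hF.ncard_neighborSet_center, hF.ncard_neighborSet_of_ne_center hu hne]
    omega

end IsIn

end Flower

open Flower

def HasDisjointFlowers (G : SimpleGraph V) (k : ℕ) : Prop :=
  ∃ F : V → Flower V k, (∀ v, (F v).IsIn G ∧ (F v).center = v) ∧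
    Pairwise (Disjoint on fun v => (F v).edges)

lemma HasDisjointFlowers.of_surjective {G : SimpleGraph V} {ι : Type*} (F : ι → Flower V k)
    (hF : ∀ i, (F i).IsIn G) (hdisj : Pairwise (Disjoint on fun i => (F i).edges))
    (hsurj : ∀ v, ∃ i, (F i).center = v) : HasDisjointFlowers G k := by
  choose σ hσ using hsurj
  refine ⟨fun v => F (σ v), fun v => ⟨hF _, hσ v⟩, fun v w hvw => hdisj ?_⟩
  exact fun h => hvw (by rw [← hσ v, ← hσ w, h])

lemma HasDisjointFlowers.locallyEulerian {G : SimpleGraph V} {r c : ℕ}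
    (h : HasDisjointFlowers G k) (hk : 0 < k) (hrc : 2 * (r - 1) + c ≤ 2 * k) :
    LocallyEulerian G r c := by
  obtain ⟨F, hF, hdisj⟩ := h
  refine ⟨fun v => (F v).toSubgraph (hF v).1, fun v w hvw => ?_, fun v => ?_⟩
  · simpa only [edgeSet_toSubgraph] using hdisj hvw
  simpa only [(hF v).2] using (hF v).1.locallyEulerian_conditions hk hrc

section Packing
variable {α β γ δ ι ι' : Type*}

def bipartiteEdges (X : Set α) (Y : Set β) : Set (Sym2 (α ⊕ β)) :=
  {e | ∃ x ∈ X, ∃ y ∈ Y, e = s(inl x, inr y)}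

lemma bipartiteEdges_mono {X X' : Set α} {Y Y' : Set β} (hX : X ⊆ X') (hY : Y ⊆ Y') :
    bipartiteEdges X Y ⊆ bipartiteEdges X' Y' := by
  rintro _ ⟨x, hx, y, hy, rfl⟩
  exact ⟨x, hX hx, y, hY hy, rfl⟩

lemma disjoint_bipartiteEdges {X X' : Set α} {Y Y' : Set β}
    (h : Disjoint X X' ∨ Disjoint Y Y') :
    Disjoint (bipartiteEdges X Y) (bipartiteEdges X' Y') := by
  refine disjoint_left.2 ?_
  rintro _ ⟨x, hx, y, hy, rfl⟩ ⟨x', hx', y', hy', he⟩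
  simp only [Sym2.eq_iff, inl.injEq, inr.injEq, reduceCtorEq, and_false, or_false] at he
  obtain ⟨rfl, rfl⟩ := he
  exact h.elim (disjoint_left.1 · hx hx') (disjoint_left.1 · hy hy')

structure IsBipartitePacking (X : Set α) (Y : Set β) (F : ι → Flower (α ⊕ β) k) :
    Prop where
  isIn : ∀ i, (F i).IsIn (completeBipartiteGraph α β)
  pairwise_disjoint : Pairwise (Disjoint on fun i => (F i).edges)
  edges_subset : ∀ i, (F i).edges ⊆ bipartiteEdges X Y

lemma Flower.IsIn.edges_subset_bipartiteEdges {F : Flower (α ⊕ β) k}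
    (hF : F.IsIn (completeBipartiteGraph α β)) : F.edges ⊆ bipartiteEdges univ univ := by
  intro e he
  have hadj := hF.edges_subset he
  induction e using Sym2.ind with | _ u v => ?_
  rcases u with x | y <;> rcases v with x' | y'
  · simp at hadj
  · exact ⟨x, trivial, y', trivial, rfl⟩
  · exact ⟨x', trivial, y, trivial, Sym2.eq_swap⟩
  · simp at hadj

lemma IsBipartitePacking.of_univ {F : ι → Flower (α ⊕ β) k}
    (hF : ∀ i, (F i).IsIn (completeBipartiteGraph α β))
    (hdisj : Pairwise (Disjoint on fun i => (F i).edges)) : IsBipartitePacking univ univ F :=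
  ⟨hF, hdisj, fun i => (hF i).edges_subset_bipartiteEdges⟩

namespace IsBipartitePacking
variable {X : Set α} {Y : Set β} {F : ι → Flower (α ⊕ β) k}

lemma map (hP : IsBipartitePacking X Y F) (f : α ↪ γ) (g : β ↪ δ) :
    IsBipartitePacking (f '' X) (g '' Y) fun i => (F i).map (Sum.map f g) := by
  let φ : completeBipartiteGraph α β ↪g completeBipartiteGraph γ δ :=
    ⟨f.sumMap g, by rintro (a | b) (a' | b') <;> simp⟩
  refine ⟨fun i => (hP.isIn i).map φ,
    pairwise_disjoint_edges_map φ.injective hP.pairwise_disjoint, fun i => ?_⟩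
  rw [edges_map]
  rintro _ ⟨e, he, rfl⟩
  obtain ⟨x, hx, y, hy, rfl⟩ := hP.edges_subset i he
  exact ⟨f x, mem_image_of_mem f hx, g y, mem_image_of_mem g hy, rfl⟩

lemma swap (hP : IsBipartitePacking X Y F) :
    IsBipartitePacking Y X fun i => (F i).map Sum.swap := by
  let φ : completeBipartiteGraph α β ↪g completeBipartiteGraph β α :=
    ⟨(Equiv.sumComm α β).toEmbedding, by rintro (a | b) (a' | b') <;> simp⟩
  refine ⟨fun i => (hP.isIn i).map φ,
    pairwise_disjoint_edges_map φ.injective hP.pairwise_disjoint, fun i => ?_⟩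
  rw [edges_map]
  rintro _ ⟨e, he, rfl⟩
  obtain ⟨x, hx, y, hy, rfl⟩ := hP.edges_subset i he
  exact ⟨y, hy, x, hx, Sym2.eq_swap⟩

lemma sumElim {X' : Set α} {Y' : Set β} {F' : ι' → Flower (α ⊕ β) k}
    (hP : IsBipartitePacking X Y F) (hP' : IsBipartitePacking X' Y' F')
    (h : Disjoint X X' ∨ Disjoint Y Y') :
    IsBipartitePacking (X ∪ X') (Y ∪ Y') (Sum.elim F F') := by
  have cross (i : ι) (j : ι') : Disjoint (F i).edges (F' j).edges :=
    (disjoint_bipartiteEdges h).mono (hP.edges_subset i) (hP'.edges_subset j)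
  refine ⟨Sum.forall.2 ⟨hP.isIn, hP'.isIn⟩, ?_, Sum.forall.2 ⟨fun i => ?_, fun i => ?_⟩⟩
  · rintro (i | i) (j | j) hij
    · exact hP.pairwise_disjoint (ne_of_apply_ne inl hij)
    · exact cross i j
    · exact (cross j i).symm
    · exact hP'.pairwise_disjoint (ne_of_apply_ne inr hij)
  · exact (hP.edges_subset i).trans (bipartiteEdges_mono subset_union_left subset_union_left)
  · exact (hP'.edges_subset i).trans (bipartiteEdges_mono subset_union_right subset_union_right)

end IsBipartitePacking

end Packing

lemma ZMod.natCast_injOn_Icc (n : ℕ) : InjOn (Nat.cast : ℕ → ZMod n) (Icc 1 n) := by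
  rintro a ⟨ha, han⟩ b ⟨hb, hbn⟩ h
  rw [ZMod.natCast_eq_natCast_iff'] at h
  rcases han.lt_or_eq with han | rfl <;> rcases hbn.lt_or_eq with hbn | rfl <;>
    simp only [Nat.mod_self, Nat.mod_eq_of_lt, *] at h <;> omega

section Cyclic
variable {n : ℕ}

/-- Call `v - u` the length of the edge `{inl u, inr v}`. The spokes of `cyclicFlower k x` have the
lengths `1, …, 2k` and the edges at `W j` the lengths `4k - 2j - 1` and `4k - 2j`: every length in
`1, …, 4k` occurs once, so flowers with different centres share no edge. -/
def cyclicFlower (k : ℕ) (x : ZMod n) : Flower (ZMod n ⊕ ZMod n) k where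
  center := inl x
  A j := inr (x + ((2 * j + 1 : ℕ) : ZMod n))
  B j := inr (x + ((2 * j + 2 : ℕ) : ZMod n))
  W j := inl (x - ((4 * (k - 1 - j) + 2 : ℕ) : ZMod n))

lemma isIn_cyclicFlower (hn : 4 * k ≤ n) (x : ZMod n) :
    (cyclicFlower k x).IsIn (completeBipartiteGraph (ZMod n) (ZMod n)) := by
  refine ⟨by simp [cyclicFlower], by simp [cyclicFlower], by simp [cyclicFlower],
    by simp [cyclicFlower], fun ⟨i, _⟩ ⟨j, _⟩ h => ?_, fun ⟨i, _⟩ ⟨j, _⟩ h => ?_,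
    fun ⟨i, _⟩ ⟨j, _⟩ h => ?_, fun ⟨i, _⟩ ⟨j, _⟩ h => ?_, by simp [cyclicFlower],
    by simp [cyclicFlower], fun ⟨j, _⟩ h => ?_⟩ <;>
    simp only [cyclicFlower, inl.injEq, inr.injEq, add_right_inj, sub_right_inj,
      sub_eq_self, ← ZMod.natCast_self n] at h <;>
    have := ZMod.natCast_injOn_Icc n ⟨by omega, by omega⟩ ⟨by omega, by omega⟩ h <;>
    first | omega | (simp only [Fin.mk.injEq]; omega)

lemma exists_of_mem_edges_cyclicFlower {x : ZMod n} {e : Sym2 (ZMod n ⊕ ZMod n)}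
    (he : e ∈ (cyclicFlower k x).edges) :
    ∃ j : Fin k, ∃ ω α : ℕ, (ω = 0 ∨ ω = 4 * (k - 1 - j) + 2) ∧
      (α = 2 * j + 1 ∨ α = 2 * j + 2) ∧ e = s(inl (x - ω), inr (x + α)) := by
  obtain ⟨j, he⟩ := mem_iUnion.1 he
  refine ⟨j, ?_⟩
  rcases he with rfl | rfl | rfl | rfl
  exacts [⟨0, _, .inl rfl, .inl rfl, by simp [cyclicFlower]⟩,
    ⟨0, _, .inl rfl, .inr rfl, by simp [cyclicFlower]⟩,
    ⟨_, _, .inr rfl, .inl rfl, rfl⟩, ⟨_, _, .inr rfl, .inr rfl, rfl⟩]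

lemma pairwise_disjoint_edges_cyclicFlower (hn : 4 * k ≤ n) :
    Pairwise (Disjoint on fun x : ZMod n => (cyclicFlower k x).edges) := by
  refine fun x x' hne => disjoint_left.2 fun e he he' => hne ?_
  obtain ⟨j, ω, α, hω, hα, rfl⟩ := exists_of_mem_edges_cyclicFlower he
  obtain ⟨j', ω', α', hω', hα', he'⟩ := exists_of_mem_edges_cyclicFlower he'
  simp only [Sym2.eq_iff, inl.injEq, inr.injEq, reduceCtorEq, and_false, or_false] at he'
  obtain ⟨hl, hr⟩ := he'
  have hlen : ((ω + α : ℕ) : ZMod n) = (ω' + α' : ℕ) := by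
    push_cast
    linear_combination hr - hl
  have := ZMod.natCast_injOn_Icc n ⟨by omega, by omega⟩ ⟨by omega, by omega⟩ hlen
  obtain rfl : ω = ω' := by omega
  exact sub_left_inj.1 hl

lemma isBipartitePacking_cyclicFlower (hn : 4 * k ≤ n) :
    IsBipartitePacking univ univ (cyclicFlower k : ZMod n → _) :=
  .of_univ (isIn_cyclicFlower hn) (pairwise_disjoint_edges_cyclicFlower hn)

end Cyclic

section Parity
variable {m : ℕ}

/-- The first coordinate splits the left side into two classes of `2k` vertices. The spokes of the
flower at `y` go to the class of the parity of `y`, and its partners `y + 2j + 1` have the other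
parity; so an edge `{inl (q, j, i), inr z}` belongs to the flower at `z` if `z` has parity `q`, and
to the one at `z - (2j + 1)` otherwise. -/
def parityFlower (k : ℕ) (y : ZMod m) : Flower ((ZMod 2 × Fin k × Fin 2) ⊕ ZMod m) k where
  center := inr y
  A j := inl (ZMod.cast y, j, 0)
  B j := inl (ZMod.cast y, j, 1)
  W j := inr (y + ((2 * j + 1 : ℕ) : ZMod m))

lemma isIn_parityFlower (hm : 2 ∣ m) (hkm : 2 * k ≤ m) (y : ZMod m) :
    (parityFlower k y).IsIn (completeBipartiteGraph (ZMod 2 × Fin k × Fin 2) (ZMod m)) := by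
  refine ⟨by simp [parityFlower], by simp [parityFlower], by simp [parityFlower],
    by simp [parityFlower], fun i j h => ?_, fun i j h => ?_, fun ⟨i, _⟩ ⟨j, _⟩ h => ?_,
    by simp [parityFlower], by simp [parityFlower], by simp [parityFlower],
    fun ⟨j, _⟩ h => ?_⟩
  · simpa [parityFlower] using h
  · simpa [parityFlower] using h
  all_goals
    simp only [parityFlower, inr.injEq, add_right_inj, add_eq_left, ← ZMod.natCast_self m] at h
    have := ZMod.natCast_injOn_Icc m ⟨by omega, by omega⟩ ⟨by omega, by omega⟩ h
    first | omega | (simp only [Fin.mk.injEq]; omega)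

lemma exists_of_mem_edges_parityFlower {y : ZMod m}
    {e : Sym2 ((ZMod 2 × Fin k × Fin 2) ⊕ ZMod m)} (he : e ∈ (parityFlower k y).edges) :
    ∃ j : Fin k, ∃ i : Fin 2, ∃ δ : ℕ, (δ = 0 ∨ δ = 2 * j + 1) ∧
      e = s(inl (ZMod.cast y, j, i), inr (y + δ)) := by
  obtain ⟨j, he⟩ := mem_iUnion.1 he
  refine ⟨j, ?_⟩
  rcases he with rfl | rfl | rfl | rfl
  exacts [⟨0, 0, .inl rfl, by simp [parityFlower, Sym2.eq_swap]⟩,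
    ⟨1, 0, .inl rfl, by simp [parityFlower, Sym2.eq_swap]⟩,
    ⟨0, _, .inr rfl, by simp [parityFlower, Sym2.eq_swap]⟩,
    ⟨1, _, .inr rfl, by simp [parityFlower, Sym2.eq_swap]⟩]

lemma pairwise_disjoint_edges_parityFlower (hm : 2 ∣ m) :
    Pairwise (Disjoint on fun y : ZMod m => (parityFlower k y).edges) := by
  refine fun y y' hne => disjoint_left.2 fun e he he' => hne ?_
  obtain ⟨j, i, δ, hδ, rfl⟩ := exists_of_mem_edges_parityFlower he
  obtain ⟨j', i', δ', hδ', he'⟩ := exists_of_mem_edges_parityFlower he'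
  simp only [Sym2.eq_iff, inl.injEq, inr.injEq, Prod.mk.injEq, reduceCtorEq, and_false,
    or_false] at he'
  obtain ⟨⟨hpar, rfl, -⟩, hsum⟩ := he'
  have hδpar : ((δ : ℕ) : ZMod 2) = (δ' : ℕ) := by
    have := congrArg (ZMod.cast : ZMod m → ZMod 2) hsum
    rwa [ZMod.cast_add hm, ZMod.cast_add hm, ZMod.cast_natCast hm, ZMod.cast_natCast hm, hpar,
      add_right_inj] at this
  rw [ZMod.natCast_eq_natCast_iff'] at hδpar
  obtain rfl : δ = δ' := by omega
  exact add_left_inj _ |>.1 hsum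

lemma isBipartitePacking_parityFlower (hm : 2 ∣ m) (hkm : 2 * k ≤ m) :
    IsBipartitePacking univ univ (parityFlower k : ZMod m → _) :=
  .of_univ (isIn_parityFlower hm hkm) (pairwise_disjoint_edges_parityFlower hm)

end Parity


section Offset
variable (α : Type*) [Fintype α] {n : ℕ}

noncomputable def offsetEmb (o : ℕ) (h : o + Fintype.card α ≤ n) : α ↪ Fin n where
  toFun a := ⟨o + Fintype.equivFin α a, by have := (Fintype.equivFin α a).isLt; omega⟩
  inj' a b hab := (Fintype.equivFin α).injective (Fin.ext (by simpa using hab))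

variable {α}

lemma val_offsetEmb {o : ℕ} {h : o + Fintype.card α ≤ n} (a : α) :
    (offsetEmb α o h a : ℕ) = o + Fintype.equivFin α a :=
  rfl

lemma mem_range_offsetEmb {o : ℕ} {h : o + Fintype.card α ≤ n} {i : Fin n} :
    i ∈ range (offsetEmb α o h) ↔ o ≤ i ∧ i < o + Fintype.card α := by
  constructor
  · rintro ⟨a, rfl⟩
    have := (Fintype.equivFin α a).isLt
    rw [val_offsetEmb]
    omega
  · rintro ⟨h₁, h₂⟩
    refine ⟨(Fintype.equivFin α).symm ⟨i - o, by omega⟩, Fin.ext ?_⟩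
    rw [val_offsetEmb, Equiv.apply_symm_apply, Fin.val_mk]
    omega

end Offset

theorem completeBipartiteGraph_hasDisjointFlowers {k p q m : ℕ} [NeZero p] (hkp : 4 * k ≤ p)
    (hpq : p ≤ q) (hqm : q ≤ m) (hm : 2 ∣ m) :
    HasDisjointFlowers (completeBipartiteGraph (Fin (p + q)) (Fin (p + m))) k := by
  have : NeZero q := ⟨by have := NeZero.ne p; omega⟩
  have : NeZero m := ⟨by have := NeZero.ne p; omega⟩
  let L₀ : ZMod p ↪ Fin (p + q) := offsetEmb _ 0 (by simp)
  let L₁ : ZMod p ↪ Fin (p + q) := offsetEmb _ p (by simpa)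
  let L₂ : ZMod q ↪ Fin (p + q) := offsetEmb _ p (by simp)
  let L₃ : ZMod 2 × Fin k × Fin 2 ↪ Fin (p + q) := offsetEmb _ 0 (by simp; omega)
  let R₀ : ZMod p ↪ Fin (p + m) := offsetEmb _ 0 (by simp)
  let R₂ : ZMod q ↪ Fin (p + m) := offsetEmb _ p (by simpa)
  let R₃ : ZMod m ↪ Fin (p + m) := offsetEmb _ p (by simp)
  have P₁ := (isBipartitePacking_cyclicFlower hkp).map L₀ R₀
  have P₂ := (isBipartitePacking_cyclicFlower hkp).swap.map L₁ R₀
  have P₃ := (isBipartitePacking_cyclicFlower (k := k) (by omega)).map L₂ R₂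
  have P₄ := (isBipartitePacking_parityFlower (k := k) hm (by omega)).map L₃ R₃
  simp only [image_univ] at P₁ P₂ P₃ P₄
  have P := (P₁.sumElim P₂ (.inl ?_)).sumElim (P₃.sumElim P₄ (.inl ?_)) (.inr ?_)
  · refine .of_surjective _ P.isIn P.pairwise_disjoint ?_
    rintro (i | i) <;> by_cases hi : (i : ℕ) < p
    · obtain ⟨x, rfl⟩ : i ∈ range L₀ := mem_range_offsetEmb.2 (by simp; omega)
      exact ⟨inl (inl x), rfl⟩
    · obtain ⟨x, rfl⟩ : i ∈ range L₂ := mem_range_offsetEmb.2 (by simp; omega)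
      exact ⟨inr (inl x), rfl⟩
    · obtain ⟨x, rfl⟩ : i ∈ range R₀ := mem_range_offsetEmb.2 (by simp; omega)
      exact ⟨inl (inr x), rfl⟩
    · obtain ⟨x, rfl⟩ : i ∈ range R₃ := mem_range_offsetEmb.2 (by simp; omega)
      exact ⟨inr (inr x), rfl⟩
  all_goals
    refine disjoint_left.2 fun i h₁ h₂ => ?_
    simp only [L₀, L₁, L₂, L₃, R₀, R₂, R₃, mem_union, mem_range_offsetEmb, ZMod.card,
      Fintype.card_prod, Fintype.card_fin] at h₁ h₂
    omega

theorem stmt_7_general (r t t' c : ℕ) (hr : 1 ≤ r) (htt' : t ≤ t') (htc : 8 * r + 4 * c + 2 ≤ t) :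
    LocallyEulerian (completeBipartiteGraph (Fin t) (Fin t')) r c := by
  set k := r + c / 2
  set p := 4 * k + t' % 2
  have : NeZero p := ⟨by omega⟩
  have hflowers := completeBipartiteGraph_hasDisjointFlowers (k := k) (p := p) (q := t - p)
    (m := t' - p) (by omega) (by omega) (by omega) (by omega)
  rw [show p + (t - p) = t by omega, show p + (t' - p) = t' by omega] at hflowers
  exact hflowers.locallyEulerian (by omega) (by omega)

/-- For positive integers r, t, t' with 11 ≤ t ≤ t' ≤ 2t − 2 and a nonnegative integer c
with t ≥ 8r + 4c + 2, the complete bipartite graph K_{t,t'} is (r, c)-locally Eulerian. -/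
theorem stmt_7 (r t t' c : ℕ) (hr : 1 ≤ r) (ht : 11 ≤ t) (htt' : t ≤ t')
    (ht'' : t' ≤ 2 * t - 2) (htc : 8 * r + 4 * c + 2 ≤ t) :
    LocallyEulerian (completeBipartiteGraph (Fin t) (Fin t')) r c :=
  stmt_7_general r t t' c hr htt' htc
end

section
/- For all positive integers n and r with n ≥ r there exists a positive integer m0 such that for every integer m with m ≥ n and m ≥ m0, the chromatic number of the matching Kneser graph KG(K_{m,n}, rK_2) of the complete bipartite graph K_{m,n} equals m(n − r + 1). -/
/-!
A matching of size `r` in `K_{m,n}` is a set of `r` cells of the `m × n` board in distinct rows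
and columns. Every such set meets the first `n - r + 1` columns, so colouring a matching by one of
its cells there is a proper colouring with `m (n - r + 1)` colours.

Conversely, take a colouring with `t = m (n - r + 1) - 1` colours and call a colour class a star
if its members share a cell. Deleting one shared cell of each star leaves a board with at least
`m (r - 1) + q + 1` cells, `q` the number of non-star classes, and removing a fullest column `r - 1`
times shows that these cells carry at least `(q + 1) c ^ (r - 1)` matchings, `c = m / n - r`. All
of them lie in non-star classes. A non-star class is an intersecting family without common
element, so it has at most `r ^ 2 (m n) ^ (r - 2)` members: every member contains a cell of a
fixed member `A₀` and, for that cell `x`, a cell of a fixed member avoiding `x`. For large `m`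
this is less than `c ^ (r - 1)`, a contradiction.
-/

open SimpleGraph

open Finset

def familyKneserGraph {X : Type*} (𝒜 : Finset (Finset X)) : SimpleGraph 𝒜 where
  Adj A B := Disjoint A.1 B.1 ∧ A ≠ B
  symm := ⟨fun _ _ h => ⟨h.1.symm, Ne.symm h.2⟩⟩
  loopless := ⟨fun _ h => h.2 rfl⟩

section FamilyKneser

variable {X : Type*} [DecidableEq X] {𝒜 : Finset (Finset X)} {U : Finset X} {r : ℕ}

lemma familyKneserGraph_colorable_of_forall_inter_nonempty (T : Finset X)
    (hT : ∀ A ∈ 𝒜, (A ∩ T).Nonempty) : (familyKneserGraph 𝒜).Colorable #T := by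
  choose pick hpick using hT
  let color (A : 𝒜) : T := ⟨pick A A.2, (mem_inter.mp (hpick A A.2)).2⟩
  refine Fintype.card_coe T ▸ (Coloring.mk color fun {A B} hAB h ↦ ?_).colorable
  have hpickB := (mem_inter.mp (hpick B B.2)).1
  rw [← show pick A A.2 = pick B B.2 from congrArg Subtype.val h] at hpickB
  exact Finset.disjoint_left.mp hAB.1 (mem_inter.mp (hpick A A.2)).1 hpickB

lemma intersecting_of_familyKneserGraph_coloring {ι : Type*} [DecidableEq ι] (hr : 0 < r)
    (h𝒜 : ∀ A ∈ 𝒜, #A = r) (C : (familyKneserGraph 𝒜).Coloring ι) (i : ι) :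
    (↑{A ∈ 𝒜 | ∃ h : A ∈ 𝒜, C ⟨A, h⟩ = i} : Set (Finset X)).Intersecting := by
  rintro A hAi B hBi hAB
  obtain ⟨-, hA, rfl⟩ := mem_filter.mp hAi
  obtain ⟨-, hB, hCB⟩ := mem_filter.mp hBi
  by_cases hAB' : A = B
  · subst hAB'
    exact (card_pos.mp (h𝒜 A hA ▸ hr)).ne_empty (disjoint_self.mp hAB)
  · exact C.valid ⟨hAB, fun h ↦ hAB' (congrArg Subtype.val h)⟩ hCB.symm

lemma card_filter_mem_mem_le (h𝒜 : ∀ A ∈ 𝒜, A ⊆ U ∧ #A = r) {x y : X} (hxy : x ≠ y) :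
    #{A ∈ 𝒜 | x ∈ A ∧ y ∈ A} ≤ #U ^ (r - 2) := by
  have hmaps : ∀ A ∈ {A ∈ 𝒜 | x ∈ A ∧ y ∈ A}, A \ {x, y} ∈ U.powersetCard (r - 2) := by
    intro A hA
    obtain ⟨hA, hx, hy⟩ := mem_filter.mp hA
    rw [mem_powersetCard, card_sdiff_of_subset (insert_subset hx (singleton_subset_iff.mpr hy)),
      card_pair hxy, (h𝒜 A hA).2]
    exact ⟨sdiff_subset.trans (h𝒜 A hA).1, rfl⟩
  have hinj : Set.InjOn (· \ {x, y}) (↑{A ∈ 𝒜 | x ∈ A ∧ y ∈ A} : Set (Finset X)) := by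
    intro A hA B hB hAB
    rw [mem_coe, mem_filter] at hA hB
    rw [← sdiff_union_of_subset (insert_subset hA.2.1 (singleton_subset_iff.mpr hA.2.2)),
      ← sdiff_union_of_subset (insert_subset hB.2.1 (singleton_subset_iff.mpr hB.2.2))]
    exact congrArg (· ∪ {x, y}) hAB
  calc #{A ∈ 𝒜 | x ∈ A ∧ y ∈ A} ≤ #(U.powersetCard (r - 2)) :=
        card_le_card_of_injOn _ hmaps hinj
    _ = (#U).choose (r - 2) := card_powersetCard _ _
    _ ≤ #U ^ (r - 2) := Nat.choose_le_pow _ _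

lemma card_le_of_intersecting_of_forall_exists_notMem (h𝒜 : ∀ A ∈ 𝒜, A ⊆ U ∧ #A = r)
    (hint : (𝒜 : Set (Finset X)).Intersecting) (hnt : ∀ x, ∃ A ∈ 𝒜, x ∉ A) :
    #𝒜 ≤ r ^ 2 * #U ^ (r - 2) := by
  obtain rfl | ⟨A₀, hA₀⟩ := 𝒜.eq_empty_or_nonempty
  · simp
  choose W hW𝒜 hW using hnt
  have hcover : 𝒜 ⊆ A₀.biUnion fun x ↦ (W x).biUnion fun y ↦ {A ∈ 𝒜 | x ∈ A ∧ y ∈ A} := by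
    intro A hA
    obtain ⟨x, hxA₀, hxA⟩ := hint.exists_mem_finset hA₀ hA
    obtain ⟨y, hyW, hyA⟩ := hint.exists_mem_finset (hW𝒜 x) hA
    simp only [mem_biUnion, mem_filter]
    exact ⟨x, hxA₀, y, hyW, hA, hxA, hyA⟩
  have hpairs : ∀ x ∈ A₀, #((W x).biUnion fun y ↦ {A ∈ 𝒜 | x ∈ A ∧ y ∈ A}) ≤
      r * #U ^ (r - 2) := fun x _ ↦
    (card_biUnion_le_card_mul _ _ _ fun y hy ↦
      card_filter_mem_mem_le h𝒜 (by rintro rfl; exact hW _ hy)).trans_eq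
      (by rw [(h𝒜 _ (hW𝒜 x)).2])
  calc #𝒜 ≤ #A₀ * (r * #U ^ (r - 2)) :=
        (card_le_card hcover).trans (card_biUnion_le_card_mul _ _ _ hpairs)
    _ = r ^ 2 * #U ^ (r - 2) := by rw [(h𝒜 A₀ hA₀).2]; ring

/-- `S` holds one common element of each colour class that has one. -/
lemma exists_card_filter_disjoint_le_of_colorable (hr : 0 < r)
    (h𝒜 : ∀ A ∈ 𝒜, A ⊆ U ∧ #A = r) {t : ℕ} (hcol : (familyKneserGraph 𝒜).Colorable t) :
    ∃ S : Finset X, #S ≤ t ∧ #{A ∈ 𝒜 | Disjoint S A} ≤ (t - #S) * (r ^ 2 * #U ^ (r - 2)) := by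
  classical
  obtain ⟨C⟩ := hcol
  set cls : Fin t → Finset (Finset X) := fun i ↦ {A ∈ 𝒜 | ∃ h : A ∈ 𝒜, C ⟨A, h⟩ = i}
  set IsStar : Fin t → Prop := fun i ↦ ∃ x, ∀ A ∈ cls i, x ∈ A
  set S := (univ : Finset {i // IsStar i}).image fun i ↦ i.2.choose
  have hS : #S ≤ #{i | IsStar i} :=
    card_image_le.trans (card_univ.trans (Fintype.card_subtype _)).le
  have hcover : {A ∈ 𝒜 | Disjoint S A} ⊆ ({i | ¬IsStar i} : Finset (Fin t)).biUnion cls := by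
    intro A hA
    obtain ⟨hA, hSA⟩ := mem_filter.mp hA
    have hAcls : A ∈ cls (C ⟨A, hA⟩) := mem_filter.mpr ⟨hA, hA, rfl⟩
    refine mem_biUnion.mpr ⟨C ⟨A, hA⟩, mem_filter.mpr ⟨mem_univ _, fun hstar ↦ ?_⟩, hAcls⟩
    have hcenter : hstar.choose ∈ S := mem_image.mpr ⟨⟨_, hstar⟩, mem_univ _, rfl⟩
    exact disjoint_left.mp hSA hcenter (hstar.choose_spec A hAcls)
  have hnonstar : ∀ i ∈ ({i | ¬IsStar i} : Finset (Fin t)),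
      #(cls i) ≤ r ^ 2 * #U ^ (r - 2) := by
    intro i hi
    refine card_le_of_intersecting_of_forall_exists_notMem
      (fun A hA ↦ h𝒜 A (mem_filter.mp hA).1)
      (intersecting_of_familyKneserGraph_coloring hr (fun A hA ↦ (h𝒜 A hA).2) C i) fun x ↦ ?_
    by_contra! hx
    exact (mem_filter.mp hi).2 ⟨x, hx⟩
  have hcount : #({i | ¬IsStar i} : Finset (Fin t)) + #{i | IsStar i} = t := by
    rw [add_comm, card_filter_add_card_filter_not, card_univ, Fintype.card_fin]
  refine ⟨S, by omega, (card_le_card hcover).trans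
    ((card_biUnion_le_card_mul _ _ _ hnonstar).trans ?_)⟩
  exact Nat.mul_le_mul_right _ (by omega)

end FamilyKneser

section BipartiteMatching

variable {α β : Type*}

def IsBipartiteMatching (P : Finset (α × β)) : Prop :=
  Set.InjOn Prod.fst (P : Set (α × β)) ∧ Set.InjOn Prod.snd (P : Set (α × β))

open Classical in
noncomputable def bipartiteMatchings (E : Finset (α × β)) (r : ℕ) : Finset (Finset (α × β)) :=
  {P ∈ E.powersetCard r | IsBipartiteMatching P}

lemma mem_bipartiteMatchings {E P : Finset (α × β)} {r : ℕ} :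
    P ∈ bipartiteMatchings E r ↔ P ⊆ E ∧ #P = r ∧ IsBipartiteMatching P := by
  simp [bipartiteMatchings, and_assoc]

lemma isBipartiteMatching_iff {P : Finset (α × β)} :
    IsBipartiteMatching P ↔ ∀ p ∈ P, ∀ q ∈ P, p ≠ q → p.1 ≠ q.1 ∧ p.2 ≠ q.2 := by
  simp only [IsBipartiteMatching, Set.InjOn, mem_coe]
  grind

lemma IsBipartiteMatching.insert [DecidableEq α] [DecidableEq β] {P : Finset (α × β)}
    (hP : IsBipartiteMatching P) {p : α × β} (h₁ : p.1 ∉ P.image Prod.fst)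
    (h₂ : p.2 ∉ P.image Prod.snd) : IsBipartiteMatching (insert p P) := by
  have hp : p ∉ P := fun h ↦ h₁ (mem_image_of_mem _ h)
  rw [IsBipartiteMatching, coe_insert, Set.injOn_insert hp, Set.injOn_insert hp, ← coe_image,
    ← coe_image, mem_coe, mem_coe]
  exact ⟨⟨hP.1, h₁⟩, hP.2, h₂⟩

lemma card_bipartiteMatchings_one (E : Finset (α × β)) : #(bipartiteMatchings E 1) = #E := by
  suffices h : bipartiteMatchings E 1 = E.map ⟨singleton, singleton_injective⟩ by
    rw [h, card_map]
  ext P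
  simp only [mem_bipartiteMatchings, card_eq_one, mem_map, Function.Embedding.coeFn_mk]
  constructor
  · rintro ⟨hPE, ⟨p, rfl⟩, -⟩
    exact ⟨p, singleton_subset_iff.mp hPE, rfl⟩
  · rintro ⟨p, hp, rfl⟩
    exact ⟨singleton_subset_iff.mpr hp, ⟨p, rfl⟩, by simp [IsBipartiteMatching]⟩

lemma filter_disjoint_bipartiteMatchings_univ [Fintype α] [Fintype β] [DecidableEq α]
    [DecidableEq β] (S : Finset (α × β)) (r : ℕ) :
    {P ∈ bipartiteMatchings (univ : Finset (α × β)) r | Disjoint S P} =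
      bipartiteMatchings (univ \ S) r := by
  ext P
  simp only [mem_filter, mem_bipartiteMatchings, subset_sdiff, subset_univ, true_and,
    disjoint_comm (a := S)]
  tauto

end BipartiteMatching

section CompleteBipartite

variable {α β : Type*}

def bipartiteEdge : α × β ↪ Sym2 (α ⊕ β) where
  toFun p := s(.inl p.1, .inr p.2)
  inj' p q h := by
    rcases Sym2.eq_iff.mp h with ⟨h₁, h₂⟩ | ⟨h₁, -⟩
    · exact Prod.ext (Sum.inl_injective h₁) (Sum.inr_injective h₂)
    · exact absurd h₁ Sum.inl_ne_inr

@[simp]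
lemma bipartiteEdge_apply (p : α × β) : bipartiteEdge p = s(.inl p.1, .inr p.2) := rfl

lemma bipartiteEdge_mem_edgeSet (p : α × β) :
    bipartiteEdge p ∈ (completeBipartiteGraph α β).edgeSet := by
  simp

lemma exists_bipartiteEdge_eq {e : Sym2 (α ⊕ β)}
    (he : e ∈ (completeBipartiteGraph α β).edgeSet) : ∃ p, bipartiteEdge p = e := by
  induction e with
  | _ u v =>
    rcases u with a | b <;> rcases v with a' | b'
    · simp at he
    · exact ⟨(a, b'), rfl⟩
    · exact ⟨(a', b), Sym2.eq_swap⟩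
    · simp at he

lemma exists_map_bipartiteEdge_eq {M : Finset (Sym2 (α ⊕ β))}
    (hM : ↑M ⊆ (completeBipartiteGraph α β).edgeSet) :
    ∃ P : Finset (α × β), P.map bipartiteEdge = M := by
  classical
  obtain ⟨P, -, hP⟩ := Finset.subset_set_image_iff.mp fun e he ↦
    (exists_bipartiteEdge_eq (hM he)).imp fun p hp ↦ ⟨Set.mem_univ p, hp⟩
  exact ⟨P, by rw [map_eq_image, hP]⟩

lemma isMatchingSet_map_bipartiteEdge_iff {P : Finset (α × β)} :
    IsMatchingSet (P.map bipartiteEdge) ↔ IsBipartiteMatching P := by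
  have hdisj (p q : α × β) :
      (∀ v ∈ bipartiteEdge p, v ∉ bipartiteEdge q) ↔ p.1 ≠ q.1 ∧ p.2 ≠ q.2 := by
    simp
  simp only [IsMatchingSet, forall_mem_map, bipartiteEdge.injective.ne_iff, hdisj,
    isBipartiteMatching_iff]

variable (α β) in
noncomputable def familyKneserGraphIsoMatchingKG [Fintype α] [Fintype β] (r : ℕ) :
    familyKneserGraph (bipartiteMatchings (univ : Finset (α × β)) r) ≃g
      matchingKG (completeBipartiteGraph α β) r where
  toEquiv := Equiv.ofBijective
    (fun P ↦ ⟨P.1.map bipartiteEdge,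
      fun e he ↦ by
        obtain ⟨p, -, rfl⟩ := mem_map.mp he
        exact bipartiteEdge_mem_edgeSet p,
      isMatchingSet_map_bipartiteEdge_iff.mpr (mem_bipartiteMatchings.mp P.2).2.2,
      by rw [card_map, (mem_bipartiteMatchings.mp P.2).2.1]⟩)
    ⟨fun P Q h ↦ Subtype.ext (map_injective bipartiteEdge (congrArg Subtype.val h)),
      fun M ↦ by
        obtain ⟨P, hP⟩ := exists_map_bipartiteEdge_eq M.2.1
        have hM := M.2.2
        rw [← hP, isMatchingSet_map_bipartiteEdge_iff, card_map] at hM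
        exact ⟨⟨P, mem_bipartiteMatchings.mpr ⟨subset_univ P, hM.2, hM.1⟩⟩, Subtype.ext hP⟩⟩
  map_rel_iff' := and_congr (disjoint_map _) (Equiv.injective _).ne_iff

end CompleteBipartite

section Supersaturation

variable {α β : Type*} [DecidableEq β]

lemma card_filter_snd_eq_le [Fintype α] (E : Finset (α × β)) (j : β) :
    #{p ∈ E | p.2 = j} ≤ Fintype.card α := by
  refine card_le_card_of_injOn Prod.fst (fun _ _ ↦ mem_univ _) fun p hp q hq h ↦ ?_
  rw [coe_filter] at hp hq
  exact Prod.ext h (hp.2.trans hq.2.symm)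

variable [DecidableEq α] {E M : Finset (α × β)} {j : β}

lemma le_card_filter_snd_eq_fst_notMem {d : ℕ} (hd : d + #M ≤ #{p ∈ E | p.2 = j}) :
    d ≤ #{p ∈ E | p.2 = j ∧ p.1 ∉ M.image Prod.fst} := by
  have hused : #{p ∈ E | p.2 = j ∧ p.1 ∈ M.image Prod.fst} ≤ #M := by
    refine (card_le_card_of_injOn Prod.fst (fun p hp ↦ (mem_filter.mp hp).2.2) ?_).trans
      card_image_le
    intro p hp q hq h
    rw [coe_filter] at hp hq
    exact Prod.ext h (hp.2.1.trans hq.2.1.symm)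
  have hsplit := card_filter_add_card_filter_not (s := {p ∈ E | p.2 = j})
    (fun p ↦ p.1 ∈ M.image Prod.fst)
  simp only [filter_filter] at hsplit
  omega

lemma insert_mem_bipartiteMatchings {k : ℕ} (hM : M ∈ bipartiteMatchings {q ∈ E | q.2 ≠ j} k)
    {p : α × β} (hp : p ∈ {q ∈ E | q.2 = j ∧ q.1 ∉ M.image Prod.fst}) :
    insert p M ∈ bipartiteMatchings E (k + 1) := by
  obtain ⟨hME, hMk, hMm⟩ := mem_bipartiteMatchings.mp hM
  obtain ⟨hpE, hpj, hp₁⟩ := mem_filter.mp hp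
  have hp₂ : p.2 ∉ M.image Prod.snd := by
    simp only [mem_image, not_exists, not_and]
    exact fun q hq h ↦ (mem_filter.mp (hME hq)).2 (h.trans hpj)
  have hpM : p ∉ M := fun h ↦ hp₁ (mem_image_of_mem _ h)
  exact mem_bipartiteMatchings.mpr ⟨insert_subset hpE (hME.trans (filter_subset _ _)),
    by rw [card_insert_of_notMem hpM, hMk], hMm.insert hp₁ hp₂⟩

lemma filter_insert_snd_ne (hM : M ⊆ {q ∈ E | q.2 ≠ j}) {p : α × β} (hpj : p.2 = j) :
    {q ∈ insert p M | q.2 ≠ j} = M := by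
  rw [filter_insert, if_neg (not_not.mpr hpj)]
  exact filter_true_of_mem fun q hq ↦ (mem_filter.mp (hM hq)).2

/-- Every `k`-matching off column `j` extends by at least `d` cells of column `j`, and the
extended matching remembers both the matching and the added cell. -/
lemma card_mul_le_card_bipartiteMatchings_succ {k d : ℕ} (hd : d + k ≤ #{p ∈ E | p.2 = j}) :
    #(bipartiteMatchings {p ∈ E | p.2 ≠ j} k) * d ≤ #(bipartiteMatchings E (k + 1)) := by
  set 𝓜 := bipartiteMatchings {p ∈ E | p.2 ≠ j} k
  set extensions : Finset (α × β) → Finset (α × β) :=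
    fun M ↦ {p ∈ E | p.2 = j ∧ p.1 ∉ M.image Prod.fst}
  have hinj : Set.InjOn (fun x : (_ : Finset (α × β)) × (α × β) ↦ insert x.2 x.1)
      ↑(𝓜.sigma extensions) := by
    rintro ⟨M, p⟩ hx ⟨M', p'⟩ hx' h
    obtain ⟨hM, hp⟩ := mem_sigma.mp hx
    obtain ⟨hM', hp'⟩ := mem_sigma.mp hx'
    simp only at h hM hp hM' hp'
    have hMsub := (mem_bipartiteMatchings.mp hM).1
    have hMM' : M = M' := by
      rw [← filter_insert_snd_ne hMsub (mem_filter.mp hp).2.1,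
        ← filter_insert_snd_ne (mem_bipartiteMatchings.mp hM').1 (mem_filter.mp hp').2.1]
      exact congrArg (filter fun q ↦ q.2 ≠ j) h
    subst hMM'
    rcases mem_insert.mp (h ▸ mem_insert_self p M : p ∈ insert p' M) with rfl | hpM
    · rfl
    · exact absurd (mem_filter.mp hp).2.1 (mem_filter.mp (hMsub hpM)).2
  calc #𝓜 * d ≤ ∑ M ∈ 𝓜, #(extensions M) := by
        rw [← smul_eq_mul]
        exact card_nsmul_le_sum _ _ _ fun M hM ↦ le_card_filter_snd_eq_fst_notMem
          ((mem_bipartiteMatchings.mp hM).2.1 ▸ hd)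
    _ = #(𝓜.sigma extensions) := (card_sigma _ _).symm
    _ ≤ #(bipartiteMatchings E (k + 1)) := card_le_card_of_injOn _
        (fun x hx ↦ insert_mem_bipartiteMatchings (mem_sigma.mp hx).1 (mem_sigma.mp hx).2) hinj

theorem le_card_bipartiteMatchings [Fintype α] [Fintype β] (r c s : ℕ)
    (hc : Fintype.card β * (c + r + 1) ≤ Fintype.card α) (hE : s + Fintype.card α * r ≤ #E) :
    s * c ^ r ≤ #(bipartiteMatchings E (r + 1)) := by
  induction r generalizing E with
  | zero => simpa [card_bipartiteMatchings_one] using hE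
  | succ r ih =>
    rcases isEmpty_or_nonempty β with hβ | hβ
    · simp [E.eq_empty_of_isEmpty] at hE
      simp [hE]
    have hαE : Fintype.card α ≤ #E := le_trans (by nlinarith) hE
    obtain ⟨j, -, hj⟩ := exists_le_card_fiber_of_mul_le_card_of_maps_to (f := Prod.snd)
      (fun p _ ↦ mem_univ p.2) univ_nonempty ((card_univ (α := β)).symm ▸ hc.trans hαE)
    have hsplit := card_filter_add_card_filter_not (s := E) fun p ↦ p.2 = j
    have hcol := card_filter_snd_eq_le E j
    have hrest : s * c ^ r ≤ #(bipartiteMatchings {p ∈ E | p.2 ≠ j} (r + 1)) :=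
      ih (by nlinarith) (by nlinarith)
    calc s * c ^ (r + 1) = s * c ^ r * c := pow_succ c r ▸ (mul_assoc _ _ _).symm
      _ ≤ #(bipartiteMatchings {p ∈ E | p.2 ≠ j} (r + 1)) * (c + 1) :=
        Nat.mul_le_mul hrest (Nat.le_succ c)
      _ ≤ #(bipartiteMatchings E (r + 1 + 1)) :=
        card_mul_le_card_bipartiteMatchings_succ (by omega)

end Supersaturation

lemma sq_mul_pow_sub_two_le_pow_sub_one {r M L c : ℕ} (hr : 0 < r) (hM : M ≤ L * c)
    (hc : r ^ 2 * L ^ (r - 2) ≤ c) : r ^ 2 * M ^ (r - 2) ≤ c ^ (r - 1) := by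
  obtain rfl | ⟨k, rfl⟩ : r = 1 ∨ ∃ k, r = k + 2 := by
    rcases r with _ | _ | k <;> simp_all
  · simp
  · simp only [add_tsub_cancel_right] at hc ⊢
    calc (k + 2) ^ 2 * M ^ k ≤ (k + 2) ^ 2 * (L * c) ^ k := by gcongr
      _ = (k + 2) ^ 2 * L ^ k * c ^ k := by ring
      _ ≤ c * c ^ k := by gcongr
      _ = c ^ (k + 1) := by ring

section ChromaticNumber

variable {α β : Type*} [Fintype α] [Fintype β] [DecidableEq α] [DecidableEq β] {r : ℕ}

theorem colorable_familyKneserGraph_bipartiteMatchings (hr : 0 < r)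
    (hrβ : r ≤ Fintype.card β) :
    (familyKneserGraph (bipartiteMatchings (univ : Finset (α × β)) r)).Colorable
      (Fintype.card α * (Fintype.card β - r + 1)) := by
  obtain ⟨B, -, hB⟩ := exists_subset_card_eq (s := (univ : Finset β))
    (n := Fintype.card β - r + 1) (by rw [card_univ]; omega)
  rw [← hB, ← card_univ, ← card_product]
  refine familyKneserGraph_colorable_of_forall_inter_nonempty _ fun P hP ↦ ?_
  obtain ⟨-, hPr, hPm⟩ := mem_bipartiteMatchings.mp hP
  by_contra hPB
  have hcols : P.image Prod.snd ⊆ Bᶜ := by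
    simp only [subset_iff, mem_image, mem_compl]
    rintro _ ⟨p, hp, rfl⟩ hpB
    exact hPB ⟨p, mem_inter.mpr ⟨hp, mem_product.mpr ⟨mem_univ _, hpB⟩⟩⟩
  have := card_le_card hcols
  rw [card_image_of_injOn hPm.2, card_compl, hPr, hB] at this
  omega

theorem not_colorable_familyKneserGraph_bipartiteMatchings (hr : 0 < r)
    (hrβ : r ≤ Fintype.card β) {c : ℕ} (hc : 0 < c)
    (hcα : Fintype.card β * (c + r) ≤ Fintype.card α)
    (hcB : r ^ 2 * (Fintype.card α * Fintype.card β) ^ (r - 2) ≤ c ^ (r - 1)) :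
    ¬(familyKneserGraph (bipartiteMatchings (univ : Finset (α × β)) r)).Colorable
      (Fintype.card α * (Fintype.card β - r + 1) - 1) := by
  intro hcol
  obtain ⟨S, hSt, hS⟩ := exists_card_filter_disjoint_le_of_colorable hr
    (fun P hP ↦ ⟨subset_univ P, (mem_bipartiteMatchings.mp hP).2.1⟩) hcol
  rw [card_univ, Fintype.card_prod, filter_disjoint_bipartiteMatchings_univ] at hS
  have hE : #(univ \ S) = Fintype.card α * Fintype.card β - #S := by
    rw [card_univ_sdiff, Fintype.card_prod]
  obtain ⟨k, rfl⟩ : ∃ k, r = k + 1 := ⟨r - 1, by omega⟩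
  have hm : 0 < Fintype.card α * (Fintype.card β - (k + 1) + 1) :=
    Nat.mul_pos (lt_of_lt_of_le (Nat.mul_pos (by omega) (by omega)) hcα) (by omega)
  have hsplit : Fintype.card α * (Fintype.card β - (k + 1) + 1) + Fintype.card α * k =
      Fintype.card α * Fintype.card β := by
    rw [← Nat.mul_add]; congr 1; omega
  have hmany := le_card_bipartiteMatchings k c
    (Fintype.card α * (Fintype.card β - (k + 1) + 1) - 1 - #S + 1)
    (E := univ \ S) (by rwa [← add_assoc] at hcα) (by omega)
  simp only [add_tsub_cancel_right] at hcB hmany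
  have hcontra := (hmany.trans hS).trans (Nat.mul_le_mul_left _ hcB)
  rw [add_one_mul] at hcontra
  have hpos : 0 < c ^ k := by positivity
  omega

theorem chromaticNumber_familyKneserGraph_bipartiteMatchings (hr : 0 < r)
    (hrβ : r ≤ Fintype.card β)
    (hα : Fintype.card β * (r ^ 2 * (Fintype.card β ^ 2 * (r + 2)) ^ (r - 2) + r) ≤
      Fintype.card α) :
    (familyKneserGraph (bipartiteMatchings (univ : Finset (α × β)) r)).chromaticNumber =
      ((Fintype.card α * (Fintype.card β - r + 1) : ℕ) : ℕ∞) := by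
  set m := Fintype.card α
  set n := Fintype.card β
  set K := r ^ 2 * (n ^ 2 * (r + 2)) ^ (r - 2)
  have hn : 0 < n := by omega
  have hK : 0 < K := by positivity
  have hKr : K + r ≤ m / n := (Nat.le_div_iff_mul_le hn).mpr (by linarith)
  set c := m / n - r
  have hcα : n * (c + r) ≤ m := (show c + r = m / n by omega) ▸ Nat.mul_div_le m n
  have hc : 0 < c := by omega
  have hmn : m * n ≤ n ^ 2 * (r + 2) * c := by
    have hm : m ≤ n * ((r + 2) * c) := calc
      m ≤ n * (c + r + 1) := (show c + r = m / n by omega) ▸ (Nat.lt_mul_div_succ m hn).le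
      _ ≤ n * ((r + 2) * c) := Nat.mul_le_mul_left n (by nlinarith)
    calc m * n ≤ n * ((r + 2) * c) * n := Nat.mul_le_mul_right n hm
      _ = n ^ 2 * (r + 2) * c := by ring
  have hN : m * (n - r + 1) = m * (n - r + 1) - 1 + 1 :=
    (Nat.sub_add_cancel (Nat.mul_pos (hα.trans_lt' (Nat.mul_pos hn (by omega))) (by omega))).symm
  rw [hN, Nat.cast_add, Nat.cast_one, chromaticNumber_eq_iff_colorable_not_colorable, ← hN]
  exact ⟨colorable_familyKneserGraph_bipartiteMatchings hr hrβ,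
    not_colorable_familyKneserGraph_bipartiteMatchings hr hrβ hc hcα
      (sq_mul_pow_sub_two_le_pow_sub_one hr hmn (by omega))⟩

end ChromaticNumber

/-- For n ≥ r ≥ 1 there exists m₀ such that for all m ≥ n with m ≥ m₀,
χ(KG(K_{m,n}, rK₂)) = m(n − r + 1). -/
theorem stmt_12 (n r : ℕ) (hr : 1 ≤ r) (hnr : r ≤ n) :
    ∃ m0 : ℕ, 0 < m0 ∧ ∀ m : ℕ, n ≤ m → m0 ≤ m →
      (matchingKG (completeBipartiteGraph (Fin m) (Fin n)) r).chromaticNumber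
        = ((m * (n - r + 1) : ℕ) : ℕ∞) := by
  refine ⟨n * (r ^ 2 * (n ^ 2 * (r + 2)) ^ (r - 2) + r), Nat.mul_pos (by omega) (by omega),
    fun m _ hm ↦ ?_⟩
  have := chromaticNumber_familyKneserGraph_bipartiteMatchings (α := Fin m) (β := Fin n) hr
    (by rwa [Fintype.card_fin]) (by rwa [Fintype.card_fin, Fintype.card_fin])
  rwa [chromaticNumber_congr (familyKneserGraphIsoMatchingKG (Fin m) (Fin n) r),
    Fintype.card_fin, Fintype.card_fin] at this
end

section
/- Let m, n, r be positive integers with m ≥ n ≥ r. Then χ(KG(K_{m,m}, rK_2)) ≤ χ(KG(K_{m,n}, rK_2)) + (m − n)m. -/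
open SimpleGraph

/-!
`K_{m,n}` is a subgraph of `K_{m,m}`. The matchings of `K_{m,m}` using only edges of this copy
induce a copy of `KG(K_{m,n}, rK₂)` and are coloured as there. Every other matching contains one of
the `(m - n)m` edges outside the copy, and is coloured by such an edge: matchings sharing an edge
are not adjacent, so this colouring is proper. The argument works for any copy of a graph `G` in a
graph `H`, with `(m - n)m` replaced by the number of edges of `H` outside the copy.
-/

namespace SimpleGraph

section Coloring

variable {V α β : Type*} {G : SimpleGraph V}

lemma Coloring.chromaticNumber_le_enatCard (C : G.Coloring α) :
    G.chromaticNumber ≤ ENat.card α := by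
  cases finite_or_infinite α
  · have := Fintype.ofFinite α
    rw [ENat.card_eq_coe_fintype_card]
    exact C.colorable.chromaticNumber_le
  · simp

def Coloring.sumCompl (s : Set V) [DecidablePred (· ∈ s)] (C₁ : (G.induce s).Coloring α)
    (C₂ : (G.induce sᶜ).Coloring β) : G.Coloring (α ⊕ β) := by
  refine Coloring.mk
    (fun v => if h : v ∈ s then .inl (C₁ ⟨v, h⟩) else .inr (C₂ ⟨v, h⟩)) fun {v w} hvw => ?_
  by_cases hv : v ∈ s <;> by_cases hw : w ∈ s <;> simp only [hv, hw, dite_true, dite_false, ne_eq,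
    Sum.inl.injEq, Sum.inr.injEq, reduceCtorEq, not_false_eq_true]
  · exact C₁.valid (G := G.induce s) hvw
  · exact C₂.valid (G := G.induce sᶜ) hvw

lemma chromaticNumber_le_add_induce_compl (G : SimpleGraph V) (s : Set V) :
    G.chromaticNumber ≤ (G.induce s).chromaticNumber + (G.induce sᶜ).chromaticNumber := by
  rcases eq_or_ne (G.induce s).chromaticNumber ⊤ with h₁ | h₁
  · simp [h₁]
  rcases eq_or_ne (G.induce sᶜ).chromaticNumber ⊤ with h₂ | h₂
  · simp [h₂]
  classical
  obtain ⟨C₁⟩ := colorable_of_chromaticNumber_ne_top h₁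
  obtain ⟨C₂⟩ := colorable_of_chromaticNumber_ne_top h₂
  calc G.chromaticNumber ≤ ENat.card (Fin _ ⊕ Fin _) :=
        (C₁.sumCompl s C₂).chromaticNumber_le_enatCard
    _ = _ := by simp [ENat.natCast_toNat h₁, ENat.natCast_toNat h₂]

end Coloring

section Matching

variable {V W : Type*} {G : SimpleGraph V} {H : SimpleGraph W}

abbrev SizedMatching (G : SimpleGraph V) (r : ℕ) :=
  {M : Finset (Sym2 V) // ↑M ⊆ G.edgeSet ∧ IsMatchingSet M ∧ M.card = r}

lemma isMatchingSet_map_iff (f : V ↪ W) {M : Finset (Sym2 V)} :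
    IsMatchingSet (M.map f.sym2Map) ↔ IsMatchingSet M := by
  simp only [IsMatchingSet, Finset.forall_mem_map, Function.Embedding.sym2Map_apply, ne_eq,
    (Sym2.map.injective f.injective).eq_iff, Sym2.mem_map, forall_exists_index, and_imp]
  constructor
  · intro h e he e' he' hne v hve hve'
    exact h e he e' he' hne (f v) v hve rfl ⟨v, hve', rfl⟩
  · rintro h e he e' he' hne _ v hve rfl ⟨w, hwe', hwv⟩
    exact h e he e' he' hne v hve (f.injective hwv ▸ hwe')

def Copy.matchingKGMap (f : Copy G H) (r : ℕ) : matchingKG G r ↪g matchingKG H r where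
  toFun M := ⟨M.1.map f.toEmbedding.sym2Map,
    (Finset.coe_map _ M.1).symm ▸ Set.image_subset_iff.mpr fun _ he =>
      f.toHom.map_mem_edgeSet (M.2.1 he),
    (isMatchingSet_map_iff _).mpr M.2.2.1, by rw [Finset.card_map, M.2.2.2]⟩
  inj' _ _ h := Subtype.ext (Finset.map_injective _ (congrArg Subtype.val h))
  map_rel_iff' :=
    and_congr (Finset.disjoint_map _) (not_congr (Subtype.ext_iff.trans
      (Finset.map_inj.trans Subtype.ext_iff.symm)))

lemma Copy.mem_range_matchingKGMap_iff (f : Copy G H) {r : ℕ} (M : SizedMatching H r) :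
    M ∈ Set.range (f.matchingKGMap r) ↔ ↑M.1 ⊆ Sym2.map f '' G.edgeSet := by
  classical
  constructor
  · rintro ⟨N, rfl⟩ _ hx
    obtain ⟨e, he, rfl⟩ := Finset.mem_map.mp hx
    exact ⟨e, N.2.1 he, rfl⟩
  · intro h
    obtain ⟨N, hNG, hNM⟩ := Finset.subset_set_image_iff.mp h
    have hmap : N.map f.toEmbedding.sym2Map = M.1 := by rw [Finset.map_eq_image]; exact hNM
    refine ⟨⟨N, hNG, (isMatchingSet_map_iff f.toEmbedding).mp (hmap ▸ M.2.2.1), ?_⟩,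
      Subtype.ext hmap⟩
    rw [← Finset.card_map f.toEmbedding.sym2Map, hmap, M.2.2.2]

lemma chromaticNumber_induce_matchingKG_le_encard {r : ℕ} (S : Set (Sym2 W))
    (s : Set (SizedMatching H r)) (hs : ∀ M ∈ s, ∃ e ∈ M.1, e ∈ S) :
    ((matchingKG H r).induce s).chromaticNumber ≤ S.encard := by
  choose e he heS using hs
  let C : ((matchingKG H r).induce s).Coloring S :=
    Coloring.mk (fun M => ⟨e M M.2, heS M M.2⟩) fun {M N} hMN hC =>
      Finset.disjoint_left.mp hMN.1 (he M M.2) (by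
        rw [show e M M.2 = e N N.2 from congrArg Subtype.val hC]
        exact he N N.2)
  exact C.chromaticNumber_le_enatCard

lemma Copy.encard_edgeSet_sdiff_image_add (f : Copy G H) :
    (H.edgeSet \ Sym2.map f '' G.edgeSet).encard + G.edgeSet.encard = H.edgeSet.encard := by
  rw [← (Sym2.map.injective f.injective).encard_image]
  refine Set.encard_sdiff_add_encard_of_subset ?_
  rintro _ ⟨e, he, rfl⟩
  exact f.toHom.map_mem_edgeSet he

theorem Copy.chromaticNumber_matchingKG_le (f : Copy G H) (r : ℕ) :
    (matchingKG H r).chromaticNumber ≤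
      (matchingKG G r).chromaticNumber + (H.edgeSet \ Sym2.map f '' G.edgeSet).encard := by
  set s := Set.range (f.matchingKGMap r)
  calc (matchingKG H r).chromaticNumber
      ≤ ((matchingKG H r).induce s).chromaticNumber
        + ((matchingKG H r).induce sᶜ).chromaticNumber :=
        chromaticNumber_le_add_induce_compl _ s
    _ ≤ _ := by
      gcongr
      · exact (chromaticNumber_congr (f.matchingKGMap r).isoInduceRange).ge
      · refine chromaticNumber_induce_matchingKG_le_encard _ _ fun M hM => ?_
        rw [Set.mem_compl_iff, f.mem_range_matchingKGMap_iff, Set.not_subset] at hM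
        obtain ⟨e, he, heG⟩ := hM
        exact ⟨e, he, M.2.1 he, heG⟩

end Matching

def Embedding.completeBipartiteGraph {α α' β β' : Type*} (f : α ↪ α') (g : β ↪ β') :
    completeBipartiteGraph α β ↪g completeBipartiteGraph α' β' where
  toEmbedding := f.sumMap g
  map_rel_iff' {u v} := by cases u <;> cases v <;> simp

end SimpleGraph

theorem stmt_18_general (m n r : ℕ) (hmn : n ≤ m) :
    (matchingKG (completeBipartiteGraph (Fin m) (Fin m)) r).chromaticNumber
      ≤ (matchingKG (completeBipartiteGraph (Fin m) (Fin n)) r).chromaticNumber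
        + (((m - n) * m : ℕ) : ℕ∞) := by
  let f := (Embedding.completeBipartiteGraph (.refl (Fin m)) (Fin.castLEEmb hmn)).toCopy
  have hedges := f.encard_edgeSet_sdiff_image_add
  simp only [encard_edgeSet_completeBipartiteGraph, ENat.card_eq_coe_fintype_card,
    Fintype.card_fin, ← Nat.cast_mul] at hedges
  have hcount : (m - n) * m + m * n = m * m := by
    rw [Nat.sub_mul, mul_comm n m, Nat.sub_add_cancel (Nat.mul_le_mul_left m hmn)]
  rw [← hcount, Nat.cast_add] at hedges
  rw [← ENat.add_left_injective_of_ne_top (ENat.natCast_ne_top _) hedges]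
  exact f.chromaticNumber_matchingKG_le r

/-- For m ≥ n ≥ r ≥ 1, χ(KG(K_{m,m}, rK₂)) ≤ χ(KG(K_{m,n}, rK₂)) + (m − n)m. -/
theorem stmt_18 (m n r : ℕ) (hr : 1 ≤ r) (hnr : r ≤ n) (hmn : n ≤ m) :
    (matchingKG (completeBipartiteGraph (Fin m) (Fin m)) r).chromaticNumber
      ≤ (matchingKG (completeBipartiteGraph (Fin m) (Fin n)) r).chromaticNumber
        + (((m - n) * m : ℕ) : ℕ∞) :=
  stmt_18_general m n r hmn
end
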